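/- Let K be an algebraically closed field of characteristic p > 0 and f ∈ K[[x]] with multiplicity m(f) = p and finite Milnor number μ, so q := μ + 1 is the smallest exponent in supp(f) not divisible by p. Set k := ⌈(q − p)/(p − 1)⌉ and d := q + k − 1. Then f is right equivalent to x^p + Σ_{n ∈ Λ} λ_n x^n for suitable λ_n ∈ K, where Λ = {n : q ≤ n ≤ d, p ∤ n}, and #Λ = ⌊q/p⌋ = ⌊μ/p⌋. -/

import Mathlib

/-!
Substitute `x ↦ w = c₁ x + c₂ x² + ⋯` with `a_p c₁ ^ p = 1`, choosing `c₂, c₃, …` one at a time.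
In characteristic `p` a term `a_j x ^ j` with `p ∣ j` becomes a `p`-th power, so for
`n ≤ min (p t) (q + t - 1)` the coefficient of `x ^ n` in `f ∘ w` depends on `c_t` only through
`a_p c_t ^ p` (when `n = p t`) and `q a_q c₁ ^ (q - 1) c_t` (when `n = q + t - 1`), and not at all
on the later `c_s`. As `K` is algebraically closed, `c_t` can thus kill the coefficient of
`x ^ min (p t) (q + t - 1)` for good. These exponents cover all multiples of `p` beyond `p` and all
exponents beyond `d`, while exponents below `q` prime to `p` never occur in `f ∘ w`. For the count,
`d / p = k`, so `Λ` has `k - (k - ⌊(q - 1) / p⌋) = ⌊q / p⌋` elements.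
-/

open PowerSeries

noncomputable def milnor (K : Type*) [Field K] (f : PowerSeries K) : ℕ :=
  Module.finrank K (PowerSeries K ⧸ Ideal.span {f.derivativeFun})

def MilnorFinite (K : Type*) [Field K] (f : PowerSeries K) : Prop :=
  Module.Finite K (PowerSeries K ⧸ Ideal.span {f.derivativeFun})

def RightEquiv (K : Type*) [Field K] (f g : PowerSeries K) : Prop :=
  ∃ Φ : PowerSeries K ≃ₐ[K] PowerSeries K, Φ f = g

open Finset

namespace PowerSeries

variable {R : Type*} [CommRing R]

theorem coeff_pow_of_lt {w : R⟦X⟧} (hw : constantCoeff w = 0) {m n : ℕ} (h : n < m) :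
    coeff n (w ^ m) = 0 :=
  coeff_of_lt_order n ((Nat.cast_lt.mpr h).trans_le (le_order_pow_of_constantCoeff_eq_zero m hw))

theorem coeff_self_pow {w : R⟦X⟧} (hw : constantCoeff w = 0) (m : ℕ) :
    coeff m (w ^ m) = coeff 1 w ^ m := by
  obtain ⟨h, rfl⟩ := X_dvd_iff.mpr hw
  rw [mul_pow, coeff_X_pow_mul', if_pos le_rfl, Nat.sub_self]
  simp only [coeff_succ_X_mul, coeff_zero_eq_constantCoeff, map_pow]

theorem coeff_subst_eq_sum {w : R⟦X⟧} (hw : constantCoeff w = 0) (f : R⟦X⟧) (n : ℕ) :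
    coeff n (f.subst w) = ∑ j ∈ range (n + 1), coeff j f * coeff n (w ^ j) := by
  rw [coeff_subst' (HasSubst.of_constantCoeff_zero' hw)]
  refine finsum_eq_sum_of_support_subset _ fun j hj => ?_
  by_contra hjn
  rw [coe_range, Set.mem_Iio, not_lt] at hjn
  exact hj (by simp only [coeff_pow_of_lt hw (Nat.lt_of_succ_le hjn), smul_zero])

theorem coeff_subst_congr {w₁ w₂ : R⟦X⟧} (hw₁ : constantCoeff w₁ = 0)
    (hw₂ : constantCoeff w₂ = 0) {n : ℕ} (h : X ^ (n + 1) ∣ w₁ - w₂) (f : R⟦X⟧) :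
    coeff n (f.subst w₁) = coeff n (f.subst w₂) := by
  rw [coeff_subst_eq_sum hw₁, coeff_subst_eq_sum hw₂]
  refine sum_congr rfl fun j _ => ?_
  rw [← sub_eq_zero, ← mul_sub, ← map_sub,
    X_pow_dvd_iff.mp (h.trans (sub_dvd_pow_sub_pow w₁ w₂ j)) n n.lt_succ_self, mul_zero]

theorem coeff_subst_of_lt {w : R⟦X⟧} (hw : constantCoeff w = 0) {f : R⟦X⟧} {m n : ℕ}
    (hf : ∀ i < m, coeff i f = 0) (hn : n < m) : coeff n (f.subst w) = 0 :=
  coeff_of_lt_order n <| (Nat.cast_lt.mpr hn).trans_le <|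
    (nat_le_order f m hf).trans (le_order_subst_left' hw)

theorem coeff_subst_of_forall_lt {w : R⟦X⟧} (hw : constantCoeff w = 0) {f : R⟦X⟧} {m : ℕ}
    (hf : ∀ i < m, coeff i f = 0) : coeff m (f.subst w) = coeff m f * coeff 1 w ^ m := by
  rw [coeff_subst_eq_sum hw, sum_range_succ,
    sum_eq_zero fun j hj => by rw [hf j (mem_range.mp hj), zero_mul], zero_add, coeff_self_pow hw]

noncomputable def substAlgEquiv {w : R⟦X⟧} (hw : constantCoeff w = 0) (hw₁ : IsUnit (coeff 1 w)) :
    R⟦X⟧ ≃ₐ[R] R⟦X⟧ :=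
  AlgEquiv.ofAlgHom (substAlgHom (HasSubst.of_constantCoeff_zero' hw))
    (substAlgHom (HasSubst.substInvOfIsUnit w hw₁))
    (AlgHom.ext fun f => by
      simp only [AlgHom.comp_apply, coe_substAlgHom, AlgHom.id_apply]
      rw [subst_comp_subst_apply (HasSubst.substInvOfIsUnit w hw₁)
        (HasSubst.of_constantCoeff_zero' hw), subst_substInvOfIsUnit_left w hw hw₁, X_subst])
    (AlgHom.ext fun f => by
      simp only [AlgHom.comp_apply, coe_substAlgHom, AlgHom.id_apply]
      rw [subst_comp_subst_apply (HasSubst.of_constantCoeff_zero' hw)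
        (HasSubst.substInvOfIsUnit w hw₁), subst_substInvOfIsUnit_right w hw hw₁, X_subst])

theorem substAlgEquiv_apply {w : R⟦X⟧} (hw : constantCoeff w = 0) (hw₁ : IsUnit (coeff 1 w))
    (f : R⟦X⟧) : substAlgEquiv hw hw₁ f = f.subst w :=
  congrFun (coe_substAlgHom (HasSubst.of_constantCoeff_zero' hw)) f

theorem coeff_pow_add_C_mul_X_pow {H : R⟦X⟧} (hH : constantCoeff H = 0) (c : R)
    {t j n : ℕ} (ht : 2 ≤ t) (hn : n + 1 ≤ j + t) :
    coeff n ((H + C c * X ^ t) ^ j) =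
      coeff n (H ^ j) + if n + 1 = j + t then j * c * coeff 1 H ^ (j - 1) else 0 := by
  obtain ⟨h, rfl⟩ := X_dvd_iff.mpr hH
  set e : R⟦X⟧ := C c * X ^ (t - 1)
  have hsum : X * h + C c * X ^ t = X * (h + e) := by
    rw [mul_add, ← mul_left_comm, ← pow_succ', Nat.sub_add_cancel (by omega)]
  -- Taylor expansion to first order in `e`; the remainder is divisible by `X ^ j * e ^ 2`.
  have hrem : X ^ (j + 2 * (t - 1)) ∣
      (X * (h + e)) ^ j - X ^ (j + (t - 1)) * (C (j * c) * h ^ (j - 1)) - (X * h) ^ j := by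
    have hsq : X ^ (2 * (t - 1)) ∣ e ^ 2 := by
      rw [mul_pow, ← pow_mul, mul_comm 2]
      exact dvd_mul_left _ _
    convert mul_dvd_mul_left (X ^ j) (hsq.trans (sq_dvd_add_pow_sub_sub e h j)) using 1
    · rw [pow_add]
    · simp only [e, mul_pow, pow_add, map_mul, map_natCast]
      ring
  have hcoeff := X_pow_dvd_iff.mp hrem n (by omega)
  rw [map_sub, map_sub, sub_sub, sub_eq_zero] at hcoeff
  rw [hsum, hcoeff, add_comm, coeff_X_pow_mul']
  simp only [coeff_succ_X_mul, coeff_zero_eq_constantCoeff]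
  congr 1
  split_ifs
  · rw [show n - (j + (t - 1)) = 0 by omega, coeff_zero_eq_constantCoeff, map_mul, map_pow,
      constantCoeff_C]
  · omega
  · omega
  · rfl

section ExpChar

variable {p : ℕ} [ExpChar R p]

theorem coeff_pow_expChar (g : R⟦X⟧) (n : ℕ) :
    coeff n (g ^ p) = if p ∣ n then coeff (n / p) g ^ p else 0 := by
  have hp := expChar_ne_zero R p
  rw [← MvPowerSeries.map_frobenius_expand p hp]
  change coeff n (map (frobenius R p) (expand p hp g)) = _
  rw [coeff_map, coeff_expand]
  split_ifs <;> simp [frobenius_def, zero_pow hp]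

theorem coeff_pow_mul_add_C_mul_X_pow {H : R⟦X⟧} (hH : constantCoeff H = 0) (c : R)
    {t n : ℕ} (ht : 2 ≤ t) (hn : n ≤ p * t) (m : ℕ) :
    coeff n ((H + C c * X ^ t) ^ (p * m)) =
      coeff n (H ^ (p * m)) + if m = 1 ∧ n = p * t then c ^ p else 0 := by
  have hp := expChar_ne_zero R p
  rcases Nat.eq_zero_or_pos m with rfl | hm
  · simp
  rw [pow_mul', pow_mul', coeff_pow_expChar (p := p), coeff_pow_expChar (p := p)]
  by_cases hpn : p ∣ n
  · obtain ⟨u, rfl⟩ := hpn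
    have hut : u ≤ t := Nat.le_of_mul_le_mul_left hn (Nat.pos_of_ne_zero hp)
    rw [if_pos (dvd_mul_right p u), if_pos (dvd_mul_right p u),
      Nat.mul_div_cancel_left u (Nat.pos_of_ne_zero hp),
      coeff_pow_add_C_mul_X_pow hH c ht (by omega), add_pow_expChar]
    congr 1
    by_cases h : m = 1 ∧ u = t
    · obtain ⟨rfl, rfl⟩ := h
      rw [if_pos (by omega), if_pos ⟨rfl, rfl⟩]
      simp
    · rw [if_neg (by omega), if_neg (by rwa [Nat.mul_right_inj hp]), zero_pow hp]
  · rw [if_neg hpn, if_neg hpn, if_neg (fun h : m = 1 ∧ n = p * t => hpn (h.2 ▸ dvd_mul_right p t)),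
      add_zero]

theorem coeff_subst_add_C_mul_X_pow {f H : R⟦X⟧} {q : ℕ}
    (hsupp : ∀ j, coeff j f ≠ 0 → p ∣ j ∨ q ≤ j) (hq : ¬ p ∣ q) (hH : constantCoeff H = 0)
    (c : R) {t n : ℕ} (ht : 2 ≤ t) (hnp : n ≤ p * t) (hnq : n + 1 ≤ q + t) :
    coeff n (f.subst (H + C c * X ^ t)) = coeff n (f.subst H) +
      ((if n = p * t then coeff p f * c ^ p else 0) +
        if n + 1 = q + t then coeff q f * (q * c * coeff 1 H ^ (q - 1)) else 0) := by
  have hE : constantCoeff (H + C c * X ^ t) = 0 := by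
    simp [hH, zero_pow (show t ≠ 0 by omega)]
  have hterm : ∀ j, coeff j f * coeff n ((H + C c * X ^ t) ^ j) =
      coeff j f * coeff n (H ^ j) +
        ((if j = p then if n = p * t then coeff j f * c ^ p else 0 else 0) +
          if j = q then if n + 1 = q + t then coeff j f * (q * c * coeff 1 H ^ (q - 1))
            else 0 else 0) := by
    intro j
    by_cases hfj : coeff j f = 0
    · simp [hfj]
    by_cases hpj : p ∣ j
    · obtain ⟨m, rfl⟩ := hpj
      rw [coeff_pow_mul_add_C_mul_X_pow hH c ht hnp,
        if_neg (fun h : p * m = q => hq (h ▸ dvd_mul_right p m))]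
      by_cases hm : m = 1
      · subst hm
        simp only [mul_one, true_and]
        split_ifs <;> ring
      · rw [if_neg (by simp [hm]),
          if_neg fun h => hm ((Nat.mul_eq_left (expChar_ne_zero R p)).mp h)]
        ring
    have hqj := (hsupp j hfj).resolve_left hpj
    rw [coeff_pow_add_C_mul_X_pow hH c ht (by omega),
      if_neg (fun h : j = p => hpj (h ▸ dvd_refl p))]
    by_cases hjq : j = q
    · subst hjq
      rw [if_pos rfl]
      split_ifs <;> ring
    · rw [if_neg (by omega), if_neg hjq]
      ring
  have hpt : p ≤ p * t := Nat.le_mul_of_pos_right p (by omega)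
  rw [coeff_subst_eq_sum hE, coeff_subst_eq_sum hH, sum_congr rfl fun j _ => hterm j,
    sum_add_distrib, sum_add_distrib, sum_ite_eq', sum_ite_eq']
  congr 2 <;> split_ifs with h₁ h₂ <;> first | rfl | (rw [mem_range] at h₁; omega)

theorem coeff_subst_eq_zero_of_not_dvd {f w : R⟦X⟧} {q n : ℕ}
    (hsupp : ∀ j, coeff j f ≠ 0 → p ∣ j ∨ q ≤ j) (hw : constantCoeff w = 0) (hn : ¬ p ∣ n)
    (hnq : n < q) : coeff n (f.subst w) = 0 := by
  rw [coeff_subst_eq_sum hw]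
  refine sum_eq_zero fun j hj => ?_
  by_cases hfj : coeff j f = 0
  · rw [hfj, zero_mul]
  obtain ⟨m, rfl⟩ := (hsupp j hfj).resolve_right (by rw [mem_range] at hj; omega)
  rw [pow_mul', coeff_pow_expChar, if_neg hn, mul_zero]

end ExpChar

end PowerSeries

theorem PowerSeries.coeff_ne_zero_and_support_of_eq_sInf {R : Type*} [Semiring R] {f : R⟦X⟧}
    {p q : ℕ} (hq0 : q ≠ 0) (hq : q = sInf {n | coeff n f ≠ 0 ∧ ¬ p ∣ n}) :
    (coeff q f ≠ 0 ∧ ¬ p ∣ q) ∧ ∀ j, coeff j f ≠ 0 → p ∣ j ∨ q ≤ j := by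
  have hne := Nat.nonempty_of_pos_sInf (hq ▸ Nat.pos_of_ne_zero hq0)
  refine ⟨hq ▸ Nat.sInf_mem hne, fun j hj => ?_⟩
  by_contra! h
  exact absurd (hq ▸ Nat.sInf_le ⟨hj, h.1⟩) (not_le.mpr h.2)

theorem Nat.card_filter_not_dvd_Ioc {a b p : ℕ} (hab : a ≤ b) :
    #{n ∈ Ioc a b | ¬ p ∣ n} = b - a - (b / p - a / p) := by
  have hdvd : #{n ∈ Ioc a b | p ∣ n} = b / p - a / p := by
    have hsplit := card_union_of_disjoint (disjoint_filter_filter (s := Ioc 0 a) (t := Ioc a b)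
      (p := (p ∣ ·)) (q := (p ∣ ·)) (Ioc_disjoint_Ioc_of_le le_rfl))
    rw [← filter_union, Ioc_union_Ioc_eq_Ioc (Nat.zero_le a) hab,
      Nat.Ioc_filter_dvd_card_eq_div, Nat.Ioc_filter_dvd_card_eq_div] at hsplit
    omega
  have := card_filter_add_card_filter_not (s := Ioc a b) (p := (p ∣ ·))
  rw [Nat.card_Ioc, hdvd] at this
  omega

theorem Nat.sub_one_mul_add_two_le_and_le_of_eq_ceil_div {p q k : ℕ} (hp : 2 ≤ p) (hpq : p ≤ q)
    (hk : k = (q - p + (p - 1) - 1) / (p - 1)) :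
    (p - 1) * k + 2 ≤ q ∧ q ≤ (p - 1) * (k + 1) + 1 := by
  rw [show q - p + (p - 1) - 1 = q - 2 by omega] at hk
  have := Nat.div_add_mod (q - 2) (p - 1)
  have := Nat.mod_lt (q - 2) (show 0 < p - 1 by omega)
  rw [← hk] at *
  rw [mul_add, mul_one]
  omega

theorem Nat.card_filter_not_dvd_Icc_eq_div {p q k : ℕ} (hp : 2 ≤ p) (hq : ¬ p ∣ q)
    (hk₁ : (p - 1) * k + 2 ≤ q) (hk₂ : q ≤ (p - 1) * (k + 1) + 1) :
    #{n ∈ Icc q (q + k - 1) | ¬ p ∣ n} = q / p := by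
  have hIcc : Icc q (q + k - 1) = Ioc (q - 1) (q + k - 1) := by
    ext n
    simp only [mem_Icc, mem_Ioc]
    omega
  have hmul : (p - 1) * k = k * p - k := by rw [Nat.sub_one_mul, mul_comm]
  have hkp : k ≤ k * p := Nat.le_mul_of_pos_right k (by omega)
  rw [mul_add, mul_one] at hk₂
  have hd : (q + k - 1) / p = k := Nat.div_eq_of_lt_le (by omega) (by rw [add_mul]; omega)
  have hq' : (q - 1) / p = q / p := by
    rw [← Nat.succ_div_of_not_dvd (by rwa [Nat.sub_add_cancel (by omega)]),
      Nat.sub_add_cancel (by omega)]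
  have hle : (q - 1) / p ≤ k := hd ▸ Nat.div_le_div_right (by omega)
  rw [hIcc, Nat.card_filter_not_dvd_Ioc (by omega), hd, ← hq']
  generalize (q - 1) / p = r at hle ⊢
  omega

theorem Nat.exists_two_le_min_eq {p q k N : ℕ} (hp : 2 ≤ p) (hpq : p < q)
    (hk : q ≤ (p - 1) * (k + 1) + 1) (hpN : p < N) (hN : p ∣ N ∨ q + k ≤ N) :
    ∃ t, 2 ≤ t ∧ min (p * t) (q + t - 1) = N := by
  have hmul : ∀ t, (p - 1) * t = p * t - t ∧ t ≤ p * t :=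
    fun t => ⟨Nat.sub_one_mul p t, Nat.le_mul_of_pos_left t (by omega)⟩
  have hmin : ∀ t, q ≤ (p - 1) * t + 1 → min (p * t) (q + t - 1) = q + t - 1 := fun t h =>
    min_eq_right (by have := hmul t; omega)
  rcases hN with ⟨u, rfl⟩ | hN
  · have hu : 1 < u := Nat.lt_of_mul_lt_mul_left (a := p) (by omega)
    by_cases hpu : p * u ≤ q + u - 1
    · exact ⟨u, hu, min_eq_left hpu⟩
    · have hut : u ≤ p * u + 1 - q := by omega
      have := Nat.mul_le_mul_left (p - 1) hut
      refine ⟨p * u + 1 - q, by omega, (hmin _ ?_).trans (by omega)⟩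
      have := hmul u
      omega
  · have hk0 : k ≠ 0 := by rintro rfl; omega
    have := Nat.mul_le_mul_left (p - 1) (show k + 1 ≤ N + 1 - q by omega)
    exact ⟨N + 1 - q, by omega, (hmin _ (by omega)).trans (by omega)⟩

theorem exists_add_mul_pow_add_mul_eq_zero {K : Type*} [Field K] [IsAlgClosed K] {p : ℕ}
    (hp : 2 ≤ p) (b α β : K) (h : α ≠ 0 ∨ β ≠ 0) : ∃ c, b + (α * c ^ p + β * c) = 0 := by
  let P : Polynomial K := .C b + (.C α * .X ^ p + .C β * .X)
  have hdeg : P.degree ≠ 0 := by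
    intro h0
    have hcoeff : ∀ i ≠ 0, P.coeff i = 0 := fun i hi => by
      rw [Polynomial.eq_C_of_degree_eq_zero h0, Polynomial.coeff_C, if_neg hi]
    have hα := hcoeff p (by omega)
    have hβ := hcoeff 1 one_ne_zero
    simp [P, Polynomial.coeff_X, Polynomial.coeff_X_pow, Polynomial.coeff_C,
      show p ≠ 0 by omega, show (1 : ℕ) ≠ p by omega] at hα hβ
    tauto
  obtain ⟨c, hc⟩ := IsAlgClosed.exists_root P hdeg
  exact ⟨c, by simpa [P] using hc⟩

section NormalForm

variable {R : Type*} [CommRing R] (f : R⟦X⟧) (c₁ : R) (target : ℕ → ℕ)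

/-- `c₁ X + ⋯ + cₜ Xᵗ`, where `cₛ` (`s ≥ 2`) kills the coefficient of `X ^ target s` in
`f ∘ (c₁ X + ⋯ + cₛ Xˢ)` if some value does (and is arbitrary otherwise). -/
noncomputable def normalizingApprox : ℕ → R⟦X⟧
  | 0 => 0
  | 1 => C c₁ * X
  | t + 2 => normalizingApprox (t + 1) + C (Classical.epsilon fun c =>
      coeff (target (t + 2)) (f.subst (normalizingApprox (t + 1) + C c * X ^ (t + 2))) = 0) *
        X ^ (t + 2)

noncomputable def normalizingSeries : R⟦X⟧ :=
  mk fun s => coeff s (normalizingApprox f c₁ target s)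

theorem exists_normalizingApprox_add_two (t : ℕ) : ∃ c, normalizingApprox f c₁ target (t + 2) =
    normalizingApprox f c₁ target (t + 1) + C c * X ^ (t + 2) :=
  ⟨_, rfl⟩

theorem constantCoeff_normalizingApprox : ∀ t, constantCoeff (normalizingApprox f c₁ target t) = 0
  | 0 => map_zero _
  | 1 => by simp [normalizingApprox]
  | t + 2 => by simp [normalizingApprox, constantCoeff_normalizingApprox (t + 1)]

theorem coeff_one_normalizingApprox :
    ∀ t, 1 ≤ t → coeff 1 (normalizingApprox f c₁ target t) = c₁
  | 1, _ => by simp [normalizingApprox]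
  | t + 2, _ => by
    rw [normalizingApprox, map_add, coeff_one_normalizingApprox (t + 1) (by omega),
      coeff_C_mul_X_pow, if_neg (by omega), add_zero]

theorem X_pow_dvd_normalizingApprox_succ_sub :
    ∀ t, X ^ (t + 1) ∣ normalizingApprox f c₁ target (t + 1) - normalizingApprox f c₁ target t
  | 0 => by simp [normalizingApprox]
  | t + 1 => by
    rw [normalizingApprox, add_sub_cancel_left]
    exact dvd_mul_left _ _

theorem X_pow_dvd_normalizingApprox_sub {t s : ℕ} (h : t ≤ s) :
    X ^ (t + 1) ∣ normalizingApprox f c₁ target s - normalizingApprox f c₁ target t := by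
  induction s, h using Nat.le_induction with
  | base => simp
  | succ s hts ih =>
    rw [← sub_add_sub_cancel _ (normalizingApprox f c₁ target s)]
    exact dvd_add ((pow_dvd_pow X (by omega)).trans
      (X_pow_dvd_normalizingApprox_succ_sub f c₁ target s)) ih

theorem X_pow_dvd_normalizingSeries_sub (t : ℕ) :
    X ^ (t + 1) ∣ normalizingSeries f c₁ target - normalizingApprox f c₁ target t := by
  refine X_pow_dvd_iff.mpr fun i hi => ?_
  have := X_pow_dvd_iff.mp (X_pow_dvd_normalizingApprox_sub f c₁ target (Nat.lt_succ_iff.mp hi))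
    i i.lt_succ_self
  rw [map_sub, sub_eq_zero] at this
  rw [map_sub, normalizingSeries, coeff_mk, this, sub_self]

theorem constantCoeff_normalizingSeries : constantCoeff (normalizingSeries f c₁ target) = 0 := by
  rw [← coeff_zero_eq_constantCoeff_apply, normalizingSeries, coeff_mk,
    coeff_zero_eq_constantCoeff_apply, constantCoeff_normalizingApprox]

theorem coeff_one_normalizingSeries : coeff 1 (normalizingSeries f c₁ target) = c₁ := by
  rw [normalizingSeries, coeff_mk, coeff_one_normalizingApprox f c₁ target 1 le_rfl]

theorem coeff_target_normalizingApprox (t : ℕ) (h : ∃ c, coeff (target (t + 2))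
      (f.subst (normalizingApprox f c₁ target (t + 1) + C c * X ^ (t + 2))) = 0) :
    coeff (target (t + 2)) (f.subst (normalizingApprox f c₁ target (t + 2))) = 0 :=
  Classical.epsilon_spec h

variable {f c₁ target}

theorem coeff_subst_normalizingApprox_of_le {p q : ℕ} [ExpChar R p]
    (hsupp : ∀ j, coeff j f ≠ 0 → p ∣ j ∨ q ≤ j) (hq : ¬ p ∣ q) {n t s : ℕ} (ht : 1 ≤ t)
    (hnp : n ≤ p * t) (hnq : n + 1 ≤ q + t) (hts : t ≤ s) :
    coeff n (f.subst (normalizingApprox f c₁ target s)) =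
      coeff n (f.subst (normalizingApprox f c₁ target t)) := by
  have hp := Nat.pos_of_ne_zero (expChar_ne_zero R p)
  induction s, hts using Nat.le_induction with
  | base => rfl
  | succ s hts ih =>
    obtain ⟨s, rfl⟩ : ∃ s', s = s' + 1 := ⟨s - 1, by omega⟩
    obtain ⟨c, hc⟩ := exists_normalizingApprox_add_two f c₁ target s
    have hlt : p * t < p * (s + 2) := Nat.mul_lt_mul_of_pos_left (by omega) hp
    rw [hc, coeff_subst_add_C_mul_X_pow hsupp hq (constantCoeff_normalizingApprox f c₁ target _) c
      (by omega) (by omega) (by omega), if_neg (by omega), if_neg (by omega), add_zero, add_zero,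
      ih]

section CharP

variable {K : Type*} [Field K] [IsAlgClosed K] {p : ℕ} [Fact p.Prime] [CharP K p]

theorem coeff_subst_normalizingSeries_eq_zero {f : K⟦X⟧} {q : ℕ}
    (hsupp : ∀ j, coeff j f ≠ 0 → p ∣ j ∨ q ≤ j) (hq : ¬ p ∣ q) (hfp : coeff p f ≠ 0)
    (hfq : coeff q f ≠ 0) {c₁ : K} (hc₁ : c₁ ≠ 0) {t : ℕ} (ht : 2 ≤ t) :
    coeff (min (p * t) (q + t - 1))
      (f.subst (normalizingSeries f c₁ fun t => min (p * t) (q + t - 1))) = 0 := by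
  set target := fun t => min (p * t) (q + t - 1)
  have hp : 2 ≤ p := (Fact.out : p.Prime).two_le
  have hq0 : q ≠ 0 := by rintro rfl; exact hq (dvd_zero p)
  obtain ⟨s, rfl⟩ : ∃ s, t = s + 2 := ⟨t - 2, by omega⟩
  set n := target (s + 2)
  have hnp : n ≤ p * (s + 2) := min_le_left _ _
  have hnq : n + 1 ≤ q + (s + 2) := by
    have : n ≤ q + (s + 2) - 1 := min_le_right _ _
    omega
  have htn : s + 2 ≤ n := le_min (Nat.le_mul_of_pos_left _ (by omega)) (by omega)
  have hroot : ∃ c, coeff n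
      (f.subst (normalizingApprox f c₁ target (s + 1) + C c * X ^ (s + 2))) = 0 := by
    simp_rw [coeff_subst_add_C_mul_X_pow hsupp hq (constantCoeff_normalizingApprox f c₁ target _) _
      (by omega) hnp hnq, coeff_one_normalizingApprox f c₁ target (s + 1) (by omega)]
    have hcoeff : (if n = p * (s + 2) then coeff p f else 0) ≠ 0 ∨
        (if n + 1 = q + (s + 2) then coeff q f * (q * c₁ ^ (q - 1)) else 0) ≠ 0 := by
      have hqK : (q : K) ≠ 0 := fun h => hq ((CharP.cast_eq_zero_iff K p q).mp h)
      rcases min_choice (p * (s + 2)) (q + (s + 2) - 1) with h | h <;> change n = _ at h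
      · exact .inl (by rwa [if_pos h])
      · refine .inr ?_
        rw [if_pos (by omega)]
        exact mul_ne_zero hfq (mul_ne_zero hqK (pow_ne_zero _ hc₁))
    obtain ⟨c, hc⟩ := exists_add_mul_pow_add_mul_eq_zero hp _ _ _ hcoeff
    refine ⟨c, Eq.trans ?_ hc⟩
    split_ifs <;> ring
  calc coeff n (f.subst (normalizingSeries f c₁ target))
      = coeff n (f.subst (normalizingApprox f c₁ target n)) :=
        coeff_subst_congr (constantCoeff_normalizingSeries f c₁ target)
          (constantCoeff_normalizingApprox f c₁ target n)
          (X_pow_dvd_normalizingSeries_sub f c₁ target n) f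
    _ = coeff n (f.subst (normalizingApprox f c₁ target (s + 2))) :=
        coeff_subst_normalizingApprox_of_le hsupp hq (by omega) hnp hnq htn
    _ = 0 := coeff_target_normalizingApprox f c₁ target s hroot

theorem exists_rightEquiv_normalForm {f : K⟦X⟧} {q k : ℕ} (hmin : ∀ i < p, coeff i f = 0)
    (hfp : coeff p f ≠ 0) (hsupp : ∀ j, coeff j f ≠ 0 → p ∣ j ∨ q ≤ j) (hq : ¬ p ∣ q)
    (hfq : coeff q f ≠ 0) (hpq : p < q) (hk : q ≤ (p - 1) * (k + 1) + 1) :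
    ∃ lam : ℕ → K, RightEquiv K f
      (X ^ p + ∑ n ∈ (Icc q (q + k - 1)).filter (fun n => ¬ p ∣ n), C (lam n) * X ^ n) := by
  have hp : 2 ≤ p := (Fact.out : p.Prime).two_le
  obtain ⟨c₁, hc₁⟩ := IsAlgClosed.exists_pow_nat_eq (coeff p f)⁻¹ (n := p) (by omega)
  have hc₁0 : c₁ ≠ 0 := by
    rintro rfl
    exact inv_ne_zero hfp (by rw [← hc₁, zero_pow (by omega)])
  set w := normalizingSeries f c₁ fun t => min (p * t) (q + t - 1)
  have hw := constantCoeff_normalizingSeries f c₁ fun t => min (p * t) (q + t - 1)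
  have hw₁ : coeff 1 w = c₁ := coeff_one_normalizingSeries f c₁ _
  refine ⟨fun n => coeff n (f.subst w), substAlgEquiv hw (by rw [hw₁]; exact hc₁0.isUnit), ?_⟩
  ext N
  rw [substAlgEquiv_apply, map_add, coeff_X_pow, map_sum]
  simp only [coeff_C_mul_X_pow]
  rw [sum_ite_eq]
  rcases lt_trichotomy N p with hNp | rfl | hpN
  · rw [coeff_subst_of_lt hw hmin hNp, if_neg hNp.ne, if_neg (by simp; omega), add_zero]
  · rw [coeff_subst_of_forall_lt hw hmin, hw₁, hc₁, mul_inv_cancel₀ hfp, if_pos rfl,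
      if_neg (by simp), add_zero]
  rw [if_neg hpN.ne', zero_add]
  split_ifs with hN
  · rfl
  rw [mem_filter, mem_Icc] at hN
  by_cases hNq : N < q ∧ ¬ p ∣ N
  · exact coeff_subst_eq_zero_of_not_dvd hsupp hw hNq.2 hNq.1
  obtain ⟨t, ht, rfl⟩ := Nat.exists_two_le_min_eq hp hpq hk hpN (by omega)
  exact coeff_subst_normalizingSeries_eq_zero hsupp hq hfp hfq hc₁0 ht

end CharP

end NormalForm

theorem stmt_11_general (K : Type*) [Field K] [IsAlgClosed K] (p : ℕ) (hp : p.Prime) [CharP K p]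
    (f : PowerSeries K) (hm : coeff p f ≠ 0) (hmin : ∀ i < p, coeff i f = 0)
    (q k d : ℕ) (hq : q = milnor K f + 1)
    (hq' : q = sInf {n | coeff n f ≠ 0 ∧ ¬ p ∣ n})
    (hk : k = (q - p + (p - 1) - 1) / (p - 1)) (hd : d = q + k - 1) :
    (∃ lam : ℕ → K, RightEquiv K f
        (X ^ p + ∑ n ∈ (Finset.Icc q d).filter (fun n => ¬ p ∣ n), C (lam n) * X ^ n)) ∧
      ((Finset.Icc q d).filter fun n => ¬ p ∣ n).card = q / p ∧
      q / p = milnor K f / p := by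
  have := Fact.mk hp
  obtain ⟨⟨hfq, hndvd⟩, hsupp⟩ := coeff_ne_zero_and_support_of_eq_sInf (by omega) hq'
  have hpq : p < q :=
    lt_of_le_of_ne (not_lt.mp fun h => hfq (hmin q h)) (by rintro rfl; simp at hndvd)
  obtain ⟨hk₁, hk₂⟩ := Nat.sub_one_mul_add_two_le_and_le_of_eq_ceil_div hp.two_le hpq.le hk
  subst hd
  refine ⟨exists_rightEquiv_normalForm hmin hm hsupp hndvd hfq hpq hk₂,
    Nat.card_filter_not_dvd_Icc_eq_div hp.two_le hndvd hk₁ hk₂, ?_⟩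
  rw [hq, Nat.succ_div_of_not_dvd (hq ▸ hndvd)]

theorem stmt_11 (K : Type*) [Field K] [IsAlgClosed K] (p : ℕ) (hp : p.Prime) [CharP K p]
    (f : PowerSeries K) (hf0 : constantCoeff f = 0) (hfin : MilnorFinite K f)
    (hm : coeff p f ≠ 0) (hmin : ∀ i < p, coeff i f = 0)
    (q k d : ℕ) (hq : q = milnor K f + 1)
    (hq' : q = sInf {n | coeff n f ≠ 0 ∧ ¬ p ∣ n})
    (hk : k = (q - p + (p - 1) - 1) / (p - 1)) (hd : d = q + k - 1) :
    (∃ lam : ℕ → K, RightEquiv K f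
        (X ^ p + ∑ n ∈ (Finset.Icc q d).filter (fun n => ¬ p ∣ n), C (lam n) * X ^ n)) ∧
      ((Finset.Icc q d).filter fun n => ¬ p ∣ n).card = q / p ∧
      q / p = milnor K f / p :=
  stmt_11_general K p hp f hm hmin q k d hq hq' hk hd
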